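/- Let δ > 0 be a grid spacing and let i be an integer. For every real u, the scaled cubic basis function u ↦ B³((u − iδ)/δ − 2) is differentiable at u with derivative equal to (1/δ)·(B²((u − iδ)/δ − 3/2) − B²((u − (i+1)δ)/δ − 3/2)); that is, the derivative of the order-3 basis function at knot index i equals (B²_i − B²_{i+1})/δ, where B²_j(u) = B²((u − jδ)/δ − 3/2). -/

import Mathlib

/-!
The cardinal B-spline of order `m` is `1/m!` times the `(m+1)`-st forward difference of the
truncated power `x₊^m`, recentred at the origin; `B2` and `B3` are the cases `m = 2, 3`.
Since `(x₊^(m+1))' = (m+1) x₊^m` for `m ≥ 1` and differentiation commutes with forward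
differences, splitting off one difference gives `B^(m+1)' t = B^m (t + 1/2) - B^m (t - 1/2)`.
The scaled statement is then the chain rule.
-/

/-- The quadratic uniform B-spline. -/
noncomputable def B2 (t : ℝ) : ℝ :=
  if |t| ≤ 1/2 then 3/4 - t^2
  else if |t| ≤ 3/2 then (1/2) * (3/2 - |t|)^2
  else 0

/-- The cubic uniform B-spline. -/
noncomputable def B3 (t : ℝ) : ℝ :=
  if |t| ≤ 1 then (1/6) * (4 - 3*t^2*(2 - |t|))
  else if |t| ≤ 2 then (1/6) * (2 - |t|)^3
  else 0

open Finset Set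
open scoped fwdDiff

-- `(Δ_[h])^[n]` needs its parentheses: `]^` is a token of the exterior power notation.
theorem HasDerivAt.fwdDiff_iter {𝕜 F : Type*} [NontriviallyNormedField 𝕜] [NormedAddCommGroup F]
    [NormedSpace 𝕜 F] {f f' : 𝕜 → F} (hf : ∀ x, HasDerivAt f (f' x) x) (h : 𝕜) (n : ℕ) (x : 𝕜) :
    HasDerivAt ((Δ_[h])^[n] f) ((Δ_[h])^[n] f' x) x := by
  induction n generalizing f f' x with
  | zero => exact hf x
  | succ n ih => exact ih (fun y => ((hf (y + h)).comp_add_const y h).sub (hf y)) x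

noncomputable def truncPow (n : ℕ) (x : ℝ) : ℝ := x⁺ ^ n

lemma truncPow_of_nonneg {n : ℕ} {x : ℝ} (hx : 0 ≤ x) : truncPow n x = x ^ n := by
  rw [truncPow, posPart_eq_self.2 hx]

lemma truncPow_of_nonpos {n : ℕ} {x : ℝ} (hn : n ≠ 0) (hx : x ≤ 0) : truncPow n x = 0 := by
  rw [truncPow, posPart_eq_zero.2 hx, zero_pow hn]

theorem hasDerivAt_truncPow_succ {n : ℕ} (hn : n ≠ 0) (x : ℝ) :
    HasDerivAt (truncPow (n + 1)) ((n + 1) * truncPow n x) x := by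
  have hpow (y : ℝ) : HasDerivAt (· ^ (n + 1)) ((n + 1) * y ^ n) y := by
    simpa using hasDerivAt_pow (n + 1) y
  rcases lt_trichotomy x 0 with hx | rfl | hx
  · rw [truncPow_of_nonpos hn hx.le, mul_zero]
    exact (hasDerivAt_const x 0).congr_of_eventuallyEq <| by
      filter_upwards [Iio_mem_nhds hx] with y hy using truncPow_of_nonpos n.succ_ne_zero hy.le
  · rw [truncPow_of_nonpos hn le_rfl, mul_zero, ← hasDerivWithinAt_univ, ← Iic_union_Ici]
    refine HasDerivWithinAt.union ?_ ?_
    · exact (hasDerivWithinAt_const 0 _ 0).congr (fun y hy => truncPow_of_nonpos n.succ_ne_zero hy)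
        (truncPow_of_nonpos n.succ_ne_zero le_rfl)
    · simpa [zero_pow hn] using (hpow 0).hasDerivWithinAt.congr (s := Ici 0)
        (fun y hy => truncPow_of_nonneg hy) (truncPow_of_nonneg le_rfl)
  · rw [truncPow_of_nonneg hx.le]
    exact (hpow x).congr_of_eventuallyEq <| by
      filter_upwards [Ioi_mem_nhds hx] with y hy using truncPow_of_nonneg hy.le

noncomputable def cardinalBSpline (m : ℕ) (t : ℝ) : ℝ :=
  (m.factorial : ℝ)⁻¹ * (Δ_[1])^[m + 1] (truncPow m) (t - (m + 1) / 2)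

theorem hasDerivAt_cardinalBSpline_succ {m : ℕ} (hm : m ≠ 0) (t : ℝ) :
    HasDerivAt (cardinalBSpline (m + 1))
      (cardinalBSpline m (t + 1 / 2) - cardinalBSpline m (t - 1 / 2)) t := by
  set y := t - (((m + 1 : ℕ) : ℝ) + 1) / 2
  have hΔ := HasDerivAt.fwdDiff_iter (hasDerivAt_truncPow_succ hm) 1 (m + 2) y
  have hsplit : (Δ_[1])^[m + 2] (fun x => ((m : ℝ) + 1) * truncPow m x) y
      = (m + 1) * ((Δ_[1])^[m + 1] (truncPow m) (y + 1) - (Δ_[1])^[m + 1] (truncPow m) y) := by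
    change (Δ_[1])^[m + 2] (((m : ℝ) + 1) • truncPow m) y = _
    rw [fwdDiff_iter_const_smul, Function.iterate_succ_apply']
    rfl
  refine ((hΔ.comp_sub_const t _).const_mul ((m + 1).factorial : ℝ)⁻¹).congr_deriv ?_
  have hy_add_one : y + 1 = t + 1 / 2 - (m + 1) / 2 := by simp only [y]; push_cast; ring
  have hy : y = t - 1 / 2 - (m + 1) / 2 := by simp only [y]; push_cast; ring
  rw [hsplit, cardinalBSpline, cardinalBSpline, ← hy_add_one, ← hy, Nat.factorial_succ]
  push_cast
  field_simp

lemma cardinalBSpline_two (t : ℝ) :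
    cardinalBSpline 2 t = (1 / 2) * (truncPow 2 (t + 3 / 2) - 3 * truncPow 2 (t + 1 / 2)
      + 3 * truncPow 2 (t - 1 / 2) - truncPow 2 (t - 3 / 2)) := by
  simp only [cardinalBSpline, fwdDiff_iter_eq_sum_shift, sum_range_succ, sum_range_zero]
  norm_num [Nat.choose, Nat.factorial]
  ring_nf

lemma cardinalBSpline_three (t : ℝ) :
    cardinalBSpline 3 t = (1 / 6) * (truncPow 3 (t + 2) - 4 * truncPow 3 (t + 1)
      + 6 * truncPow 3 t - 4 * truncPow 3 (t - 1) + truncPow 3 (t - 2)) := by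
  simp only [cardinalBSpline, fwdDiff_iter_eq_sum_shift, sum_range_succ, sum_range_zero]
  norm_num [Nat.choose, Nat.factorial]
  ring_nf

theorem B2_eq_cardinalBSpline : B2 = cardinalBSpline 2 := by
  ext t
  rw [cardinalBSpline_two]
  rcases le_or_gt 0 t with ht | ht
  · rw [B2, abs_of_nonneg ht]
    split_ifs <;> simp (disch := grind) only [truncPow_of_nonneg, truncPow_of_nonpos] <;> ring
  · rw [B2, abs_of_neg ht]
    split_ifs <;> simp (disch := grind) only [truncPow_of_nonneg, truncPow_of_nonpos] <;> ring

theorem B3_eq_cardinalBSpline : B3 = cardinalBSpline 3 := by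
  ext t
  rw [cardinalBSpline_three]
  rcases le_or_gt 0 t with ht | ht
  · rw [B3, abs_of_nonneg ht]
    split_ifs <;> simp (disch := grind) only [truncPow_of_nonneg, truncPow_of_nonpos] <;> ring
  · rw [B3, abs_of_neg ht]
    split_ifs <;> simp (disch := grind) only [truncPow_of_nonneg, truncPow_of_nonpos] <;> ring

theorem hasDerivAt_B3 (t : ℝ) : HasDerivAt B3 (B2 (t + 1 / 2) - B2 (t - 1 / 2)) t := by
  rw [B3_eq_cardinalBSpline, B2_eq_cardinalBSpline]
  exact hasDerivAt_cardinalBSpline_succ two_ne_zero t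

/-- On a grid of spacing `δ > 0`, the derivative of the order-3 basis function at knot
index `i`, namely `u ↦ B3 ((u - i*δ)/δ - 2)`, exists at every `u` and equals
`(1/δ) * (B2_i u - B2_{i+1} u)` where `B2_j u = B2 ((u - j*δ)/δ - 3/2)`. -/
theorem hasDerivAt_scaled_B3 (δ : ℝ) (hδ : 0 < δ) (i : ℤ) (u : ℝ) :
    HasDerivAt (fun u' : ℝ => B3 ((u' - (i : ℝ) * δ) / δ - 2))
      ((1/δ) * (B2 ((u - (i : ℝ) * δ) / δ - 3/2)
        - B2 ((u - ((i : ℝ) + 1) * δ) / δ - 3/2))) u := by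
  have haffine : HasDerivAt (fun u' : ℝ => (u' - i * δ) / δ - 2) (1 / δ) u := by
    simpa using (((hasDerivAt_id u).sub_const (i * δ)).div_const δ).sub_const 2
  have hleft : (u - i * δ) / δ - 2 + 1 / 2 = (u - i * δ) / δ - 3 / 2 := by ring
  have hright : (u - i * δ) / δ - 2 - 1 / 2 = (u - (i + 1) * δ) / δ - 3 / 2 := by
    field_simp
    ring
  rw [mul_comm (1 / δ), ← hleft, ← hright]
  exact (hasDerivAt_B3 _).comp u haffine
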